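/- For tuples ā ∈ A and b̄ ∈ B of the same length and α ≥ 1, the back-and-forth relation (A,ā) ≤_α (B,b̄) holds if and only if every infinitary Π^in_α formula true of ā in A is true of b̄ in B. -/

import Mathlib

attribute [local instance] Classical.propDecidable

noncomputable section

/-! ## Basic oracle computability on Cantor space -/

abbrev Cantor := ℕ → Bool

/-- Kleene-style partial recursion relative to an oracle `O`. -/
inductive RecursiveInO (O : ℕ →. ℕ) : (ℕ →. ℕ) → Prop
  | oracle : RecursiveInO O O
  | zero : RecursiveInO O (pure 0)
  | succ : RecursiveInO O Nat.succ
  | left : RecursiveInO O ↑fun n : ℕ => n.unpair.1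
  | right : RecursiveInO O ↑fun n : ℕ => n.unpair.2
  | pair {f g} : RecursiveInO O f → RecursiveInO O g →
      RecursiveInO O fun n => Nat.pair <$> f n <*> g n
  | comp {f g} : RecursiveInO O f → RecursiveInO O g →
      RecursiveInO O fun n => g n >>= f
  | prec {f g} : RecursiveInO O f → RecursiveInO O g →
      RecursiveInO O (Nat.unpaired fun a n =>
        n.rec (f a) fun y IH => do let i ← IH; g (Nat.pair a (Nat.pair y i)))
  | rfind {f} : RecursiveInO O f →
      RecursiveInO O fun a => Nat.rfind fun n => (fun m => m = 0) <$> f (Nat.pair a n)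

def asOracle (X : Cantor) : ℕ →. ℕ := fun n => Part.some (cond (X n) 1 0)

/-- `TRed X Y` : `X` is Turing reducible to `Y` (`X ≤_T Y`). -/
def TRed (X Y : Cantor) : Prop := RecursiveInO (asOracle Y) (asOracle X)

/-- Turing equivalence. -/
def TEquiv (X Y : Cantor) : Prop := TRed X Y ∧ TRed Y X

/-- Turing join `X ⊕ Y`. -/
def joinC (X Y : Cantor) : Cantor := fun n => if n % 2 = 0 then X (n / 2) else Y (n / 2)

def evens (Z : Cantor) : Cantor := fun n => Z (2 * n)
def odds (Z : Cantor) : Cantor := fun n => Z (2 * n + 1)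

/-- `X` is (outright) computable. -/
def ComputableC (X : Cantor) : Prop := TRed X fun _ => false

/-! ## Ordinals computable in an oracle; `ω₁^X` -/

/-- The strict order relation on the field coded by `r` (as a set of codes of pairs). -/
def relOf (r : Cantor) :
    {n : ℕ // r (Nat.pair n n) = true} → {n : ℕ // r (Nat.pair n n) = true} → Prop :=
  fun a b => r (Nat.pair a.1 b.1) = true ∧ a.1 ≠ b.1

/-- `r` codes a well-ordering of order type `α`. -/
def CodesOrdinal (r : Cantor) (α : Ordinal) : Prop :=
  ∃ h : IsWellOrder _ (relOf r), @Ordinal.type _ (relOf r) h = α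

/-- `ω₁^X`: the least ordinal with no `X`-computable copy. -/
def omega1C (X : Cantor) : Ordinal :=
  sInf {α : Ordinal | ¬ ∃ r : Cantor, TRed r X ∧ CodesOrdinal r α}

/-- `α` is admissible: of the form `ω₁^X`. -/
def AdmissibleOrd (α : Ordinal) : Prop := ∃ X : Cantor, omega1C X = α

/-! ## Projective sets and projective determinacy -/

/-- Projective subsets of Cantor space. -/
inductive ProjectiveSet : Set Cantor → Prop
  | borel {s : Set Cantor} : MeasurableSet s → ProjectiveSet s
  | compl {s} : ProjectiveSet s → ProjectiveSet sᶜ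
  | proj {s} : ProjectiveSet s → ProjectiveSet {X | ∃ Y : Cantor, joinC X Y ∈ s}

/-- A function `2^ω → 2^ω` is projective if its graph is. -/
def ProjFun (g : Cantor → Cantor) : Prop := ProjectiveSet {Z | odds Z = g (evens Z)}

/-- History of a play of the Gale–Stewart game where I follows `σ`, II follows `τ`. -/
def histAux (σ τ : List Bool → Bool) : ℕ → List Bool
  | 0 => []
  | n + 1 => histAux σ τ n ++ [if n % 2 = 0 then σ (histAux σ τ n) else τ (histAux σ τ n)]

/-- The infinite play produced by strategies `σ` (player I) and `τ` (player II). -/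
def play (σ τ : List Bool → Bool) : Cantor :=
  fun n => if n % 2 = 0 then σ (histAux σ τ n) else τ (histAux σ τ n)

/-- The game with payoff `A` is determined. -/
def DeterminedG (A : Set Cantor) : Prop :=
  (∃ σ, ∀ τ, play σ τ ∈ A) ∨ (∃ τ, ∀ σ, play σ τ ∉ A)

/-- Projective determinacy. -/
def PD : Prop := ∀ A : Set Cantor, ProjectiveSet A → DeterminedG A

/-! ## Trees on `2^{<ω}` -/

def seg (Y : Cantor) (n : ℕ) : List Bool := (List.range n).map Y

def IsTree (P : List Bool → Bool) : Prop :=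
  P [] = true ∧ ∀ σ b, P (σ ++ [b]) = true → P σ = true

def IsPathT (P : List Bool → Bool) (Y : Cantor) : Prop := ∀ n, P (seg Y n) = true

def IsSplit (P : List Bool → Bool) (σ : List Bool) : Prop :=
  P (σ ++ [false]) = true ∧ P (σ ++ [true]) = true

def PerfectT (P : List Bool → Bool) : Prop :=
  ∀ σ, P σ = true → ∃ τ, σ <+: τ ∧ IsSplit P τ

def PrunedT (P : List Bool → Bool) : Prop :=
  ∀ σ, P σ = true → P (σ ++ [false]) = true ∨ P (σ ++ [true]) = true

/-- The tree as an element of Cantor space (via coding of finite strings). -/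
def treeSet (P : List Bool → Bool) : Cantor := fun n =>
  match (Encodable.decode n : Option (List Bool)) with
  | some σ => P σ
  | none => false

/-- A perfect (pruned) tree all of whose paths compute it. -/
def PointedT (P : List Bool → Bool) : Prop :=
  IsTree P ∧ PrunedT P ∧ PerfectT P ∧ ∀ Y, IsPathT P Y → TRed (treeSet P) Y

/-- Number of splitting levels of `P` along `Y` below `k`. -/
def splitsBelow (P : List Bool → Bool) (Y : Cantor) (k : ℕ) : ℕ :=
  ((List.range k).filter fun j => decide (IsSplit P (seg Y j))).length

/-- `Y` is the path of `P` obtained by following `X` at every split of `P`. -/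
def FollowsT (P : List Bool → Bool) (X Y : Cantor) : Prop :=
  IsPathT P Y ∧ (∀ n, ∃ k, n ≤ k ∧ IsSplit P (seg Y k)) ∧
    ∀ k, IsSplit P (seg Y k) → Y k = X (splitsBelow P Y k)

/-! ## Countable structures and infinitary logic -/

/-- A structure on domain `ℕ` in the relational language whose `i`-th symbol has arity `ar i`. -/
def Str (ar : ℕ → ℕ) := (i : ℕ) → (Fin (ar i) → ℕ) → Prop

/-- `L_{ω₁,ω}` formulas (variables indexed by `ℕ`, countable conjunctions). -/
inductive IForm (ar : ℕ → ℕ) : Type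
  | atom (i : ℕ) (v : Fin (ar i) → ℕ)
  | eq (x y : ℕ)
  | not (φ : IForm ar)
  | conj (φs : ℕ → IForm ar)
  | all (x : ℕ) (φ : IForm ar)

variable {ar : ℕ → ℕ}

def Sat (A : Str ar) : (ℕ → ℕ) → IForm ar → Prop
  | s, .atom i v => A i fun j => s (v j)
  | s, .eq x y => s x = s y
  | s, .not φ => ¬ Sat A s φ
  | s, .conj φs => ∀ n, Sat A s (φs n)
  | s, .all x φ => ∀ a : ℕ, Sat A (Function.update s x a) φ

def freeVars : IForm ar → Set ℕ
  | .atom _ v => Set.range v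
  | .eq x y => {x, y}
  | .not φ => freeVars φ
  | .conj φs => ⋃ n, freeVars (φs n)
  | .all x φ => freeVars φ \ {x}

/-- A sentence: no free variables. -/
def SentenceF (φ : IForm ar) : Prop := freeVars φ = ∅

/-- Satisfaction of a sentence. -/
def SatS (A : Str ar) (φ : IForm ar) : Prop := Sat A (fun _ => 0) φ

def IForm.disj (φs : ℕ → IForm ar) : IForm ar := .not (.conj fun n => .not (φs n))
def IForm.ex (x : ℕ) (φ : IForm ar) : IForm ar := .not (.all x (.not φ))
def IForm.exs (l : List ℕ) (φ : IForm ar) : IForm ar := l.foldr IForm.ex φ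
def IForm.alls (l : List ℕ) (φ : IForm ar) : IForm ar := l.foldr IForm.all φ
def IForm.and (φ ψ : IForm ar) : IForm ar := .conj fun n => if n = 0 then φ else ψ

/-- Finitary quantifier-free formulas. -/
inductive QFree : IForm ar → Prop
  | atom {i v} : QFree (.atom i v)
  | eq {x y} : QFree (.eq x y)
  | not {φ} : QFree φ → QFree (.not φ)
  | and {φ ψ} : QFree φ → QFree ψ → QFree (φ.and ψ)

mutual
/-- `Σ^in_α` formulas. -/
inductive IsSig : Ordinal.{0} → IForm ar → Prop
  | qf {α : Ordinal} {φ : IForm ar} : QFree φ → IsSig α φ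
  | comp {α : Ordinal} (β : ℕ → Ordinal) (vs : ℕ → List ℕ) (φs : ℕ → IForm ar) :
      (∀ n, β n < α) → (∀ n, IsPi (β n) (φs n)) →
      IsSig α (IForm.disj fun n => IForm.exs (vs n) (φs n))
/-- `Π^in_α` formulas. -/
inductive IsPi : Ordinal.{0} → IForm ar → Prop
  | qf {α : Ordinal} {φ : IForm ar} : QFree φ → IsPi α φ
  | comp {α : Ordinal} (β : ℕ → Ordinal) (vs : ℕ → List ℕ) (φs : ℕ → IForm ar) :
      (∀ n, β n < α) → (∀ n, IsSig (β n) (φs n)) →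
      IsPi α (.conj fun n => IForm.alls (vs n) (φs n))
end

/-- `Σ^in_α`-elementary equivalence (`A ≡_α B`). -/
def SigEquiv (α : Ordinal) (A B : Str ar) : Prop :=
  ∀ φ : IForm ar, IsSig α φ → SentenceF φ → (SatS A φ ↔ SatS B φ)

/-- The assignment sending variable `i` to the `i`-th entry of the tuple `a`. -/
def asn (a : List ℕ) : ℕ → ℕ := fun i => a.getD i 0

/-- Every `Π^in_α` formula (with free variables among the tuple) true of `ā` in `A`
is true of `b̄` in `B`. -/
def PiTypeSub (α : Ordinal) (A : Str ar) (a : List ℕ) (B : Str ar) (b : List ℕ) : Prop :=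
  ∀ φ : IForm ar, IsPi α φ → freeVars φ ⊆ Set.Iio a.length →
    Sat A (asn a) φ → Sat B (asn b) φ

/-! ## Back-and-forth relations -/

/-- `ā` and `b̄` satisfy the same atomic formulas among the first `|ā|` symbols. -/
def atomEquiv (A : Str ar) (a : List ℕ) (B : Str ar) (b : List ℕ) : Prop :=
  a.length = b.length ∧
  (∀ p q, p < a.length → q < a.length →
    (a.getD p 0 = a.getD q 0 ↔ b.getD p 0 = b.getD q 0)) ∧
  (∀ i, i < a.length → ∀ v : Fin (ar i) → ℕ, (∀ j, v j < a.length) →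
    (A i (fun j => a.getD (v j) 0) ↔ B i fun j => b.getD (v j) 0))

/-- The `α`-back-and-forth relations `(A,ā) ≤_α (B,b̄)`. -/
def BFLe (α : Ordinal.{0}) (A : Str ar) (a : List ℕ) (B : Str ar) (b : List ℕ) : Prop :=
  if α = 0 then atomEquiv A a B b
  else ∀ (d : List ℕ) (γ : Ordinal.{0}) (hγ : γ < α),
    ∃ c : List ℕ, c.length = d.length ∧ BFLe γ B (b ++ d) A (a ++ c)
termination_by α
decreasing_by exact hγ

/-- `(A,ā) ≡_α (B,b̄)`. -/
def BFEq (α : Ordinal) (A : Str ar) (a : List ℕ) (B : Str ar) (b : List ℕ) : Prop :=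
  BFLe α A a B b ∧ BFLe α B b A a

/-- `(C,c̄)` belongs to `ext_β(A,ā)`: it is `≤_β` some `(A, ād̄)`. -/
def ExtMem (β : Ordinal) (C : Str ar) (c : List ℕ) (A : Str ar) (a : List ℕ) : Prop :=
  ∃ d : List ℕ, c.length = a.length + d.length ∧ BFLe β C c A (a ++ d)

/-- Re-arrangement `π_ι` of a tuple. -/
def projT (ι : List ℕ) (a : List ℕ) : List ℕ := ι.map fun j => a.getD j 0

/-! ## Isomorphism, diagrams, copies, spectra, Scott rank -/

def IsoStr (A B : Str ar) : Prop :=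
  ∃ e : ℕ ≃ ℕ, ∀ i v, A i v ↔ B i fun j => e (v j)

/-- `D` is (the characteristic function of) the atomic diagram of `B`. -/
def DiagOf (B : Str ar) (D : Cantor) : Prop :=
  ∀ i (v : Fin (ar i) → ℕ),
    (B i v ↔ D (Nat.pair i (Encodable.encode (List.ofFn v))) = true)

/-- `X` computes a copy of `A`. -/
def ComputesCopy (X : Cantor) (A : Str ar) : Prop :=
  ∃ B D, IsoStr A B ∧ DiagOf B D ∧ TRed D X

/-- `ω₁^A = min{ω₁^X : X computes a copy of A}`. -/
def omega1Str (A : Str ar) : Ordinal :=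
  sInf {β : Ordinal | ∃ X, ComputesCopy X A ∧ omega1C X = β}

/-- `ω₁^{A,Y} = min{ω₁^X : X ≥_T Y, X computes a copy of A}`. -/
def omega1StrRel (A : Str ar) (Y : Cantor) : Ordinal :=
  sInf {β : Ordinal | ∃ X, TRed Y X ∧ ComputesCopy X A ∧ omega1C X = β}

/-- The two tuples satisfy the same `L_{ω₁,ω}` formulas in `A`. -/
def AllTypeEq (A : Str ar) (a b : List ℕ) : Prop :=
  ∀ φ : IForm ar, freeVars φ ⊆ Set.Iio a.length → (Sat A (asn a) φ ↔ Sat A (asn b) φ)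

/-- `ρ_A(ā)`: least `α` such that the `Π^in_α` type of `ā` determines its full type. -/
def rhoSR (A : Str ar) (a : List ℕ) : Ordinal :=
  sInf {α : Ordinal | ∀ b : List ℕ, b.length = a.length →
    PiTypeSub α A a A b → AllTypeEq A a b}

/-- Scott rank. -/
def SR (A : Str ar) : Ordinal := ⨆ a : List ℕ, rhoSR A a + 1

/-! ## Counting models -/

def CountablyManyModels (T : IForm ar) : Prop :=
  ∃ S : Set (Str ar), S.Countable ∧ ∀ A, SatS A T → ∃ B ∈ S, IsoStr A B

/-- `T` is scattered: countably many `≡_α`-classes of models for each `α < ω₁`. -/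
def ScatteredT (T : IForm ar) : Prop :=
  ∀ α : Ordinal, α < (Cardinal.aleph 1).ord →
    ∃ S : Set (Str ar), S.Countable ∧ ∀ A, SatS A T → ∃ B ∈ S, SatS B T ∧ SigEquiv α A B

/-- Counterexample to Vaught's conjecture. -/
def CexVC (T : IForm ar) : Prop := ScatteredT T ∧ ¬ CountablyManyModels T

/-- `T` has exactly `ℵ₁` many models up to isomorphism. -/
def Aleph1ManyModels (T : IForm ar) : Prop :=
  Cardinal.mk (Quot fun A B : {M : Str ar // SatS M T} => IsoStr A.1 B.1) = Cardinal.aleph 1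

/-- Minimal counterexample to Vaught's conjecture. -/
def MinimalCex (T : IForm ar) : Prop :=
  Aleph1ManyModels T ∧ ScatteredT T ∧
    ∀ φ : IForm ar, SentenceF φ →
      CountablyManyModels (T.and φ) ∨ CountablyManyModels (T.and φ.not)

/-! ## Computable infinitary formulas -/

/-- `FCodes ar c φ`: `c` is a code of the computable infinitary formula `φ`. -/
inductive FCodes (ar : ℕ → ℕ) : ℕ → IForm ar → Prop
  | atom (i : ℕ) (v : Fin (ar i) → ℕ) :
      FCodes ar (Nat.pair 0 (Nat.pair i (Encodable.encode (List.ofFn fun j => v j)))) (.atom i v)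
  | eq (x y : ℕ) : FCodes ar (Nat.pair 1 (Nat.pair x y)) (.eq x y)
  | not {c φ} : FCodes ar c φ → FCodes ar (Nat.pair 2 c) (.not φ)
  | all {c φ} (x : ℕ) : FCodes ar c φ → FCodes ar (Nat.pair 3 (Nat.pair x c)) (.all x φ)
  | conj (c : Nat.Partrec.Code) (g : ℕ → ℕ) (φs : ℕ → IForm ar) :
      (∀ n, g n ∈ c.eval n) → (∀ n, FCodes ar (g n) (φs n)) →
      FCodes ar (Nat.pair 4 (Encodable.encode c)) (.conj φs)

/-- A computable infinitary (`L^c_{ω₁,ω}`) formula. -/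
def ComputableForm (φ : IForm ar) : Prop := ∃ c, FCodes ar c φ

/-! ## Finite diagrams -/

/-- `m` codes an atomic fact (among the first `|ā|` symbols) true of `ā` in `A`. -/
def FinDiagMem (A : Str ar) (a : List ℕ) (m : ℕ) : Prop :=
  ∃ (i : ℕ) (l : List ℕ), m = Nat.pair i (Encodable.encode l) ∧ i < a.length ∧
    l.length = ar i ∧ (∀ j ∈ l, j < a.length) ∧ A i fun j => a.getD (l.getD (j : ℕ) 0) 0

def tuplesBelow (k : ℕ) : ℕ → List (List ℕ)
  | 0 => [[]]
  | n + 1 => (List.range k).flatMap fun x => (tuplesBelow k n).map fun l => x :: l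

def atomCodes (ar : ℕ → ℕ) (k : ℕ) : List ℕ :=
  (List.range k).flatMap fun i => (tuplesBelow k (ar i)).map fun l => Nat.pair i (Encodable.encode l)

/-- A number coding the atomic diagram `D_A(ā)` of the tuple `ā` in `A`
(over the first `|ā|` symbols of the language). -/
def diagCode (A : Str ar) (a : List ℕ) : ℕ :=
  Nat.pair a.length <| Encodable.encode <|
    (atomCodes ar a.length).filter fun m => decide (FinDiagMem A a m)

/-- A computably enumerable set of naturals. -/
def CEset (S : Set ℕ) : Prop := ∃ c : Nat.Partrec.Code, ∀ n, n ∈ S ↔ (c.eval n).Dom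

/-! ## Hyperarithmetic reducibility (via the Δ¹₁ = HYP characterization) -/

def Pi11In (X : Cantor) (S : Set ℕ) : Prop :=
  ∃ R : Cantor, TRed R X ∧ ∀ n, n ∈ S ↔
    ∀ f : ℕ → ℕ, ∃ k, R (Nat.pair n (Encodable.encode ((List.range k).map f))) = true

/-- `Y` is hyperarithmetic in `X` (i.e. `Δ¹₁(X)`). -/
def HypIn (Y X : Cantor) : Prop :=
  Pi11In X {n | Y n = true} ∧ Pi11In X {n | Y n = false}

/-- `A` has an `X`-hyperarithmetic copy. -/
def HypCopy (X : Cantor) (A : Str ar) : Prop :=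
  ∃ B D, IsoStr A B ∧ DiagOf B D ∧ HypIn D X

/-! ## The theory `T_α` of the `α`-back-and-forth structure, semantically -/

/-- A structure in the extended language `L_α`: a base `L`-structure together with
interpretations of the relations `φ_σ`, where the `β`-bf-type `σ` is represented by a
pair `(C, c̄)` (a model of `T` with a distinguished tuple). -/
structure ExtModel (ar : ℕ → ℕ) where
  base : Str ar
  Phi : Ordinal.{0} → Str ar → List ℕ → List ℕ → Prop

/-- Interpretation of `ψ_σ(b̄) := ⋁_{σ' ∈ bf_α, (σ')_β = σ} φ_{σ'}(b̄)`,
with `σ` represented by `(C, c̄)`. -/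
def PsiH (T : IForm ar) (α : Ordinal.{0}) (M : ExtModel ar) (β : Ordinal.{0})
    (C : Str ar) (c b : List ℕ) : Prop :=
  ∃ (C' : Str ar) (c' : List ℕ), SatS C' T ∧ c'.length = b.length ∧
    BFEq β C' c' C c ∧ M.Phi α C' c' b

/-- `M` is a model of the theory `T_α` axiomatizing the `α`-bf-structure of `T`:
(invariance of the symbols `φ_σ` in the representative of `σ`), (T1) every tuple realizes
exactly one `β`-bf-type, (T2) the recursive definition of `φ_σ`, and (T3) the
implications of `ψ_σ`. -/
def ModelsTAlpha (T : IForm ar) (α : Ordinal.{0}) (M : ExtModel ar) : Prop :=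
  (∀ β ≤ α, ∀ (C : Str ar) (c : List ℕ) (C' : Str ar) (c' : List ℕ) (b : List ℕ),
      SatS C T → SatS C' T → BFEq β C c C' c' → (M.Phi β C c b ↔ M.Phi β C' c' b)) ∧
  (∀ b : List ℕ, ∃ (C : Str ar) (c : List ℕ), SatS C T ∧ c.length = b.length ∧
      M.Phi α C c b) ∧
  (∀ β < α, ∀ (b : List ℕ) (C : Str ar) (c : List ℕ) (C' : Str ar) (c' : List ℕ),
      SatS C T → SatS C' T → PsiH T α M β C c b → PsiH T α M β C' c' b →
      BFEq β C c C' c') ∧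
  (∀ β ≤ α, ∀ (C : Str ar) (c : List ℕ), SatS C T → ∀ b : List ℕ,
      (M.Phi β C c b ↔ b.length = c.length ∧
        (β = 0 → atomEquiv C c M.base b) ∧
        (∀ γ < β, ∀ (D : Str ar) (d : List ℕ), SatS D T → ¬ ExtMem γ D d C c →
          ∀ y : List ℕ, d.length = b.length + y.length → ¬ M.Phi γ D d (b ++ y)))) ∧
  (∀ β < α, ∀ (C : Str ar) (c b : List ℕ), SatS C T → PsiH T α M β C c b →
      M.Phi β C c b ∧ ∀ γ < β, ∀ (D : Str ar) (d : List ℕ), SatS D T →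
        ExtMem γ D d C c →
        ∃ y : List ℕ, d.length = b.length + y.length ∧ M.Phi γ D d (b ++ y))

/-! ## Presentations of the `α`-back-and-forth structure -/

/-- A presentation `𝔹` of the `α`-bf-structure of `T`: an enumeration of the bf-types
of levels `≤ α` (given by levels and representatives), together with an oracle `B`
coding the relations `≤_β`, the projections `(·)_β` and `π_ι`, the extension relations
`ext`, and the atomic diagrams of the `0`-bf-types. -/
structure BFPres (ar : ℕ → ℕ) (T : IForm ar) (α : Ordinal.{0}) where
  B : Cantor
  lvl : ℕ → Ordinal.{0}
  repS : ℕ → Str ar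
  repT : ℕ → List ℕ
  lvl_le : ∀ n, lvl n ≤ α
  rep_models : ∀ n, SatS (repS n) T
  surj : ∀ β ≤ α, ∀ (A : Str ar) (a : List ℕ), SatS A T →
    ∃ n, lvl n = β ∧ (repT n).length = a.length ∧ BFEq β (repS n) (repT n) A a
  le_code : ∀ m n, (B (Nat.pair 0 (Nat.pair m n)) = true ↔
    lvl m = lvl n ∧ BFLe (lvl m) (repS m) (repT m) (repS n) (repT n))
  proj_code : ∀ m n, (B (Nat.pair 1 (Nat.pair m n)) = true ↔
    lvl m ≤ lvl n ∧ BFEq (lvl m) (repS m) (repT m) (repS n) (repT n))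
  ext_code : ∀ m n, (B (Nat.pair 2 (Nat.pair m n)) = true ↔
    lvl m < lvl n ∧ ExtMem (lvl m) (repS m) (repT m) (repS n) (repT n))
  pi_code : ∀ m n (ι : List ℕ),
    (B (Nat.pair 3 (Nat.pair m (Nat.pair n (Encodable.encode ι)))) = true ↔
      lvl m = lvl n ∧ (∀ j ∈ ι, j < (repT n).length) ∧
      BFEq (lvl m) (repS m) (repT m) (repS n) (projT ι (repT n)))
  diag_code : ∀ m k, (B (Nat.pair 4 (Nat.pair m k)) = true ↔
    lvl m = 0 ∧ FinDiagMem (repS m) (repT m) k)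

end

/-!
Forward direction: by induction on `α`, `≤_α` carries `Π^in_α` formulas from `(A, ā)` to `(B, b̄)`
and `Σ^in_α` formulas back. For a block `∀ x̄ ψ`, values for `x̄` in `B` are answered by the back
step of `≤_α` with values in `A`, the roles of the two sides swap, and `ψ` is a `Σ^in_β` formula
carried back along `≤_β`. Quantifier-free formulas are why `α ≥ 1` is needed: `≤_0` only compares
the first `|ā|` relation symbols, while one back step may lengthen the tuples past any symbol.

Converse: by induction on `γ`, a failure of `(A, ā) ≤_γ (B, b̄)` is witnessed by a `Π^in_γ`
formula true of `ā` and false of `b̄`, and by a `Σ^in_γ` formula true of `b̄` and false of `ā`.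
If the failure comes from `d̄` and `β < γ` with `(B, b̄d̄) ≰_β (A, āc̄)` for every `c̄`, the
`Σ^in_β` witnesses for all the `c̄` form a countable disjunction, and quantifying it universally
over the variables of `d̄` gives the `Π^in_γ` witness. For `β = 0` a countable disjunction of
quantifier-free formulas is not quantifier-free; there the negated atomic diagram of `b̄d̄`,
a finite formula, takes its place.
-/

section
variable {ar : ℕ → ℕ}

theorem sat_disj {A : Str ar} {s : ℕ → ℕ} {φs : ℕ → IForm ar} :
    Sat A s (IForm.disj φs) ↔ ∃ n, Sat A s (φs n) := by
  simp only [IForm.disj, Sat, not_forall, not_not]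

theorem sat_ex {A : Str ar} {s : ℕ → ℕ} {x : ℕ} {φ : IForm ar} :
    Sat A s (IForm.ex x φ) ↔ ∃ v, Sat A (Function.update s x v) φ := by
  simp only [IForm.ex, Sat, not_forall, not_not]

theorem sat_and {A : Str ar} {s : ℕ → ℕ} {φ ψ : IForm ar} :
    Sat A s (φ.and ψ) ↔ Sat A s φ ∧ Sat A s ψ := by
  refine ⟨fun h => ⟨h 0, h 1⟩, fun h n => ?_⟩
  by_cases hn : n = 0
  · simpa [IForm.and, Sat, hn] using h.1
  · simpa [IForm.and, Sat, hn] using h.2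

theorem freeVars_disj {φs : ℕ → IForm ar} :
    freeVars (IForm.disj φs) = ⋃ n, freeVars (φs n) := by
  simp [IForm.disj, freeVars]

theorem freeVars_and {φ ψ : IForm ar} : freeVars (φ.and ψ) = freeVars φ ∪ freeVars ψ := by
  ext z
  simp only [IForm.and, freeVars, Set.mem_iUnion, Set.mem_union]
  refine ⟨fun ⟨n, hn⟩ => ?_, ?_⟩
  · by_cases h : n = 0 <;> simp_all
  · rintro (h | h)
    exacts [⟨0, by simpa using h⟩, ⟨1, by simpa using h⟩]

theorem sat_congr {A : Str ar} {φ : IForm ar} {s t : ℕ → ℕ} (h : Set.EqOn s t (freeVars φ)) :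
    Sat A s φ ↔ Sat A t φ := by
  induction φ generalizing s t with
  | atom i v => simp only [Sat, show (fun j => s (v j)) = fun j => t (v j) from
      funext fun j => h ⟨j, rfl⟩]
  | eq x y => simp only [Sat, h (show x ∈ freeVars (.eq x y : IForm ar) by simp [freeVars]),
      h (show y ∈ freeVars (.eq x y : IForm ar) by simp [freeVars])]
  | not φ ih => exact not_congr (ih h)
  | conj φs ih =>
    exact forall_congr' fun n => ih n (h.mono (Set.subset_iUnion (fun n => freeVars (φs n)) n))
  | all x φ ih =>
    refine forall_congr' fun v => ih fun y hy => ?_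
    rcases eq_or_ne y x with rfl | hne
    · simp
    · simpa [Function.update_of_ne hne] using h ⟨hy, hne⟩

/-- A repeated variable gets its last value; surplus entries of either list are ignored. -/
def updates (u : ℕ → ℕ) : List ℕ → List ℕ → ℕ → ℕ
  | x :: xs, v :: vs => updates (Function.update u x v) xs vs
  | _, _ => u

theorem updates_of_not_mem {x : ℕ} {xs vs : List ℕ} {u : ℕ → ℕ} (hx : x ∉ xs) :
    updates u xs vs x = u x := by
  induction xs generalizing vs u with
  | nil => cases vs <;> rfl
  | cons y xs ih =>
    cases vs with
    | nil => rfl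
    | cons v vs =>
      rw [List.mem_cons, not_or] at hx
      rw [updates, ih hx.2, Function.update_of_ne hx.1]

theorem updates_of_mem {x : ℕ} {xs : List ℕ} (hx : x ∈ xs) :
    ∃ i < xs.length, xs.getD i 0 = x ∧
      ∀ (u : ℕ → ℕ) (vs : List ℕ), vs.length = xs.length → updates u xs vs x = vs.getD i 0 := by
  induction xs with
  | nil => simp at hx
  | cons y xs ih =>
    by_cases hxs : x ∈ xs
    · obtain ⟨i, hi, hget, hval⟩ := ih hxs
      refine ⟨i + 1, by simpa using hi, by simpa using hget, fun u vs hvs => ?_⟩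
      obtain _ | ⟨v, vs⟩ := vs
      · simp at hvs
      · rw [updates, hval _ vs (by simpa using hvs)]
        simp
    · obtain rfl : x = y := (List.mem_cons.1 hx).resolve_right hxs
      refine ⟨0, by simp, by simp, fun u vs hvs => ?_⟩
      obtain _ | ⟨v, vs⟩ := vs
      · simp at hvs
      · rw [updates, updates_of_not_mem hxs]
        simp

theorem sat_alls {A : Str ar} {φ : IForm ar} {xs : List ℕ} {u : ℕ → ℕ} :
    Sat A u (IForm.alls xs φ) ↔
      ∀ vs : List ℕ, vs.length = xs.length → Sat A (updates u xs vs) φ := by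
  induction xs generalizing u with
  | nil =>
    refine ⟨fun h vs _ => ?_, fun h => h [] rfl⟩
    cases vs <;> exact h
  | cons x xs ih =>
    refine ⟨fun h vs hvs => ?_, fun h v => ih.2 fun vs hvs => h (v :: vs) (by simp [hvs])⟩
    obtain _ | ⟨v, vs⟩ := vs
    · simp at hvs
    · exact ih.1 (h v) vs (by simpa using hvs)

theorem sat_exs {A : Str ar} {φ : IForm ar} {xs : List ℕ} {u : ℕ → ℕ} :
    Sat A u (IForm.exs xs φ) ↔
      ∃ vs : List ℕ, vs.length = xs.length ∧ Sat A (updates u xs vs) φ := by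
  induction xs generalizing u with
  | nil =>
    refine ⟨fun h => ⟨[], rfl, h⟩, fun ⟨vs, _, h⟩ => ?_⟩
    cases vs <;> exact h
  | cons x xs ih =>
    refine ⟨fun h => ?_, fun ⟨vs, hvs, h⟩ => ?_⟩
    · obtain ⟨v, hv⟩ := sat_ex.1 h
      obtain ⟨vs, hvs, h⟩ := ih.1 hv
      exact ⟨v :: vs, by simp [hvs], h⟩
    · obtain _ | ⟨v, vs⟩ := vs
      · simp at hvs
      · exact sat_ex.2 ⟨v, ih.2 ⟨vs, by simpa using hvs, h⟩⟩

theorem freeVars_alls {φ : IForm ar} {xs : List ℕ} :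
    freeVars (IForm.alls xs φ) = freeVars φ \ {x | x ∈ xs} := by
  induction xs with
  | nil => simp [IForm.alls]
  | cons x xs ih =>
    change freeVars (IForm.alls xs φ) \ {x} = _
    rw [ih]
    ext z
    simp only [Set.mem_sdiff, Set.mem_ofPred_eq, List.mem_cons, Set.mem_singleton_iff]
    tauto

theorem freeVars_exs {φ : IForm ar} {xs : List ℕ} :
    freeVars (IForm.exs xs φ) = freeVars φ \ {x | x ∈ xs} := by
  induction xs with
  | nil => simp [IForm.exs]
  | cons x xs ih =>
    change freeVars (IForm.not (.all x (.not (IForm.exs xs φ)))) = _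
    simp only [freeVars, ih]
    ext z
    simp only [Set.mem_sdiff, Set.mem_ofPred_eq, List.mem_cons, Set.mem_singleton_iff]
    tauto

theorem bfLe_zero_iff {A B : Str ar} {a b : List ℕ} : BFLe 0 A a B b ↔ atomEquiv A a B b := by
  rw [BFLe]; simp

theorem bfLe_iff_of_ne_zero {α : Ordinal} (hα : α ≠ 0) {A B : Str ar} {a b : List ℕ} :
    BFLe α A a B b ↔ ∀ (d : List ℕ) (γ : Ordinal), γ < α →
      ∃ c : List ℕ, c.length = d.length ∧ BFLe γ B (b ++ d) A (a ++ c) := by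
  rw [BFLe]; simp [hα]

theorem atomEquiv_refl (A : Str ar) (a : List ℕ) : atomEquiv A a A a :=
  ⟨rfl, fun _ _ _ _ => Iff.rfl, fun _ _ _ _ => Iff.rfl⟩

theorem ne_nil_of_not_atomEquiv {A B : Str ar} {a b : List ℕ} (hlen : a.length = b.length)
    (h : ¬ atomEquiv A a B b) : a ≠ [] := by
  rintro rfl
  obtain rfl := List.eq_nil_of_length_eq_zero hlen.symm
  exact h ⟨rfl, fun _ _ hp => absurd hp (Nat.not_lt_zero _),
    fun _ hi => absurd hi (Nat.not_lt_zero _)⟩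

def Corresponds (a b : List ℕ) (V : Set ℕ) (s t : ℕ → ℕ) : Prop :=
  ∀ z ∈ V, ∃ p < a.length, s z = a.getD p 0 ∧ t z = b.getD p 0

namespace Corresponds

variable {a b : List ℕ} {V : Set ℕ} {s t : ℕ → ℕ}

theorem mono {W : Set ℕ} (h : Corresponds a b W s t) (hVW : V ⊆ W) : Corresponds a b V s t :=
  fun z hz => h z (hVW hz)

theorem symm (hlen : a.length = b.length) (h : Corresponds a b V s t) : Corresponds b a V t s :=
  fun z hz => let ⟨p, hp, hs, ht⟩ := h z hz; ⟨p, hlen ▸ hp, ht, hs⟩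

theorem append (hlen : a.length = b.length) (h : Corresponds a b V s t) (a' b' : List ℕ) :
    Corresponds (a ++ a') (b ++ b') V s t := fun z hz =>
  let ⟨p, hp, hs, ht⟩ := h z hz
  ⟨p, by simp; omega, by rw [List.getD_append _ _ _ _ hp, hs],
    by rw [List.getD_append _ _ _ _ (hlen ▸ hp), ht]⟩

theorem updates (hlen : a.length = b.length) {xs u w : List ℕ}
    (h : Corresponds a b (V \ {z | z ∈ xs}) s t) (hu : u.length = xs.length)
    (hw : w.length = xs.length) :
    Corresponds (a ++ u) (b ++ w) V (_root_.updates s xs u) (_root_.updates t xs w) := by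
  intro z hz
  by_cases hzxs : z ∈ xs
  · obtain ⟨i, hi, -, hval⟩ := updates_of_mem hzxs
    refine ⟨a.length + i, by simp; omega, ?_, ?_⟩
    · rw [hval s u hu, List.getD_append_right _ _ _ _ (Nat.le_add_right _ _),
        Nat.add_sub_cancel_left]
    · rw [hval t w hw, hlen, List.getD_append_right _ _ _ _ (Nat.le_add_right _ _),
        Nat.add_sub_cancel_left]
  · rw [updates_of_not_mem hzxs, updates_of_not_mem hzxs]
    exact (h.append hlen u w) z ⟨hz, hzxs⟩

end Corresponds

/-- Exceeds every relation symbol of a quantifier-free formula; of a `conj` only the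
conjuncts `0` and `1`, those of `IForm.and`, are inspected. -/
def relBound : IForm ar → ℕ
  | .atom i _ => i + 1
  | .eq _ _ => 0
  | .not φ => relBound φ
  | .conj φs => max (relBound (φs 0)) (relBound (φs 1))
  | .all _ φ => relBound φ

theorem QFree.sat_iff_of_atomEquiv {A B : Str ar} {a b : List ℕ} {φ : IForm ar} (hq : QFree φ)
    (hE : atomEquiv A a B b) (hb : relBound φ ≤ a.length) {s t : ℕ → ℕ}
    (hc : Corresponds a b (freeVars φ) s t) : Sat A s φ ↔ Sat B t φ := by
  induction hq generalizing s t with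
  | @atom i v =>
    choose p hp hs ht using fun j : Fin (ar i) => hc (v j) ⟨j, rfl⟩
    change A i (fun j => s (v j)) ↔ B i (fun j => t (v j))
    simp only [hs, ht]
    exact hE.2.2 i hb p hp
  | @eq x y =>
    obtain ⟨p, hp, hsx, htx⟩ := hc x (by simp [freeVars])
    obtain ⟨q, hq, hsy, hty⟩ := hc y (by simp [freeVars])
    change s x = s y ↔ t x = t y
    rw [hsx, htx, hsy, hty]
    exact hE.2.1 p q hp hq
  | not _ ih => exact not_congr (ih hb hc)
  | and _ _ ihφ ihψ =>
    simp only [relBound, IForm.and, if_pos, max_le_iff] at hb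
    rw [freeVars_and] at hc
    rw [sat_and, sat_and]
    exact and_congr (ihφ hb.1 (hc.mono Set.subset_union_left))
      (ihψ hb.2 (hc.mono Set.subset_union_right))

/-- For `α ≠ 0`, one back step pads the tuples with dummy entries, so that `≤_0` compares
every relation symbol of `φ`. -/
theorem QFree.sat_iff_of_bfLe {α : Ordinal} {A B : Str ar} {a b : List ℕ} {φ : IForm ar}
    (hq : QFree φ) (h : BFLe α A a B b) (hlen : a.length = b.length)
    (hb : α = 0 → relBound φ ≤ a.length) {s t : ℕ → ℕ}
    (hc : Corresponds a b (freeVars φ) s t) : Sat A s φ ↔ Sat B t φ := by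
  rcases eq_or_ne α 0 with rfl | hα
  · exact hq.sat_iff_of_atomEquiv (bfLe_zero_iff.1 h) (hb rfl) hc
  obtain ⟨c, -, h0⟩ :=
    (bfLe_iff_of_ne_zero hα).1 h (List.replicate (relBound φ) 0) 0 (pos_iff_ne_zero.2 hα)
  exact (hq.sat_iff_of_atomEquiv (bfLe_zero_iff.1 h0) (by simp)
    ((hc.symm hlen).append hlen.symm _ _)).symm

/-- The padding to length `K` lets `≤_0` see every relation symbol of a quantifier-free formula
when `β = 0`. -/
theorem BFLe.exists_corresponds_updates {α β : Ordinal} {A B : Str ar} {a b : List ℕ}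
    (h : BFLe α A a B b) (hβ : β < α) (hlen : a.length = b.length) (K : ℕ) {V : Set ℕ}
    {xs w : List ℕ} {s t : ℕ → ℕ} (hc : Corresponds a b (V \ {z | z ∈ xs}) s t)
    (hw : w.length = xs.length) :
    ∃ u : List ℕ, u.length = xs.length ∧ ∃ b' a', BFLe β B b' A a' ∧ b'.length = a'.length ∧
      K ≤ b'.length ∧ Corresponds b' a' V (updates t xs w) (updates s xs u) := by
  obtain ⟨c, hcl, hbf⟩ :=
    (bfLe_iff_of_ne_zero (ne_bot_of_gt hβ)).1 h (w ++ List.replicate K 0) β hβ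
  simp only [List.length_append, List.length_replicate] at hcl
  refine ⟨c.take w.length, by simp [← hw]; omega, _, _, hbf, by simp [hlen, hcl], by simp; omega,
    ?_⟩
  rw [← List.append_assoc, show a ++ c = a ++ c.take w.length ++ c.drop w.length by simp]
  exact ((hc.symm hlen).updates hlen.symm hw (by simp [← hw]; omega)).append
    (by simp [hlen]; omega) _ _

theorem BFLe.sat_transfer (α : Ordinal) {A B : Str ar} {a b : List ℕ} (h : BFLe α A a B b)
    (hlen : a.length = b.length) :
    (∀ φ, IsPi α φ → (α = 0 → relBound φ ≤ a.length) → ∀ {s t : ℕ → ℕ},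
      Corresponds a b (freeVars φ) s t → Sat A s φ → Sat B t φ) ∧
    (∀ φ, IsSig α φ → (α = 0 → relBound φ ≤ a.length) → ∀ {s t : ℕ → ℕ},
      Corresponds a b (freeVars φ) s t → Sat B t φ → Sat A s φ) := by
  induction α using WellFoundedLT.induction generalizing A B a b with
  | _ α IH =>
  refine ⟨fun φ hφ hb s t hc hA => ?_, fun φ hφ hb s t hc hB => ?_⟩
  · cases hφ with
    | qf hq => exact (hq.sat_iff_of_bfLe h hlen hb hc).1 hA
    | comp β vs φs hβ hφs =>
      intro n
      refine sat_alls.2 fun w hw => ?_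
      have hcn : Corresponds a b (freeVars (φs n) \ {z | z ∈ vs n}) s t :=
        hc.mono (freeVars_alls ▸ Set.subset_iUnion (fun n => freeVars (IForm.alls (vs n) (φs n))) n)
      obtain ⟨u, hu, b', a', hbf, hlen', hK, hc'⟩ :=
        h.exists_corresponds_updates (hβ n) hlen (relBound (φs n)) hcn hw
      exact (IH _ (hβ n) hbf hlen').2 _ (hφs n) (fun _ => hK) hc' (sat_alls.1 (hA n) u hu)
  · cases hφ with
    | qf hq => exact (hq.sat_iff_of_bfLe h hlen hb hc).2 hB
    | comp β vs φs hβ hφs =>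
      obtain ⟨n, hn⟩ := sat_disj.1 hB
      obtain ⟨w, hw, hBw⟩ := sat_exs.1 hn
      have hcn : Corresponds a b (freeVars (φs n) \ {z | z ∈ vs n}) s t :=
        hc.mono (freeVars_disj ▸ freeVars_exs ▸
          Set.subset_iUnion (fun n => freeVars (IForm.exs (vs n) (φs n))) n)
      obtain ⟨u, hu, b', a', hbf, hlen', hK, hc'⟩ :=
        h.exists_corresponds_updates (hβ n) hlen (relBound (φs n)) hcn hw
      exact sat_disj.2 ⟨n, sat_exs.2 ⟨u, hu,
        (IH _ (hβ n) hbf hlen').1 _ (hφs n) (fun _ => hK) hc' hBw⟩⟩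

def atomsBelow (ar : ℕ → ℕ) (L : ℕ) : Set (IForm ar) :=
  {φ | (∃ p < L, ∃ q < L, φ = .eq p q) ∨
    ∃ i < L, ∃ v : Fin (ar i) → ℕ, (∀ j, v j < L) ∧ φ = .atom i v}

theorem atomsBelow_finite (L : ℕ) : (atomsBelow ar L).Finite := by
  refine ((Set.finite_range fun pq : Fin L × Fin L => (IForm.eq pq.1 pq.2 : IForm ar)).union
    (Set.finite_iUnion fun i : Fin L =>
      Set.finite_range fun v : Fin (ar i) → Fin L => IForm.atom i fun j => v j)).subset ?_
  rintro φ (⟨p, hp, q, hq, rfl⟩ | ⟨i, hi, v, hv, rfl⟩)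
  · exact Or.inl ⟨(⟨p, hp⟩, ⟨q, hq⟩), rfl⟩
  · exact Or.inr (Set.mem_iUnion.2 ⟨⟨i, hi⟩, fun j => ⟨v j, hv j⟩, rfl⟩)

theorem atomEquiv_iff {A B : Str ar} {a b : List ℕ} (hlen : a.length = b.length) :
    atomEquiv A a B b ↔ ∀ φ ∈ atomsBelow ar a.length, (Sat A (asn a) φ ↔ Sat B (asn b) φ) := by
  refine ⟨?_, fun h => ⟨hlen, fun p q hp hq => h _ (Or.inl ⟨p, hp, q, hq, rfl⟩),
    fun i hi v hv => h _ (Or.inr ⟨i, hi, v, hv, rfl⟩)⟩⟩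
  rintro ⟨-, heq, hatom⟩ φ (⟨p, hp, q, hq, rfl⟩ | ⟨i, hi, v, hv, rfl⟩)
  exacts [heq p q hp hq, hatom i hi v hv]

theorem freeVars_subset_of_mem_atomsBelow {L : ℕ} {φ : IForm ar} (h : φ ∈ atomsBelow ar L) :
    freeVars φ ⊆ Set.Iio L := by
  rcases h with ⟨p, hp, q, hq, rfl⟩ | ⟨i, hi, v, hv, rfl⟩
  · rintro z (rfl | rfl)
    exacts [hp, hq]
  · rintro z ⟨j, rfl⟩
    exact hv j

theorem QFree.of_mem_atomsBelow {L : ℕ} {φ : IForm ar} (h : φ ∈ atomsBelow ar L) : QFree φ := by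
  rcases h with ⟨p, -, q, -, rfl⟩ | ⟨i, -, v, -, rfl⟩
  exacts [QFree.eq, QFree.atom]

/-- The empty conjunction `0 = 0` mentions the variable `0`. -/
def andList : List (IForm ar) → IForm ar
  | [] => .eq 0 0
  | φ :: l => φ.and (andList l)

theorem sat_andList {M : Str ar} {u : ℕ → ℕ} {l : List (IForm ar)} :
    Sat M u (andList l) ↔ ∀ φ ∈ l, Sat M u φ := by
  induction l with
  | nil => simp [andList, Sat]
  | cons φ l ih => simp [andList, sat_and, ih]

theorem QFree.andList {l : List (IForm ar)} (h : ∀ φ ∈ l, QFree φ) : QFree (andList l) := by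
  induction l with
  | nil => exact QFree.eq
  | cons φ l ih => exact QFree.and (h φ (by simp)) (ih fun ψ hψ => h ψ (by simp [hψ]))

theorem freeVars_andList_subset {l : List (IForm ar)} {V : Set ℕ} (h0 : 0 ∈ V)
    (h : ∀ φ ∈ l, freeVars φ ⊆ V) : freeVars (andList l) ⊆ V := by
  induction l with
  | nil => simpa [andList, freeVars] using h0
  | cons φ l ih =>
    rw [andList, freeVars_and]
    exact Set.union_subset (h φ (by simp)) (ih fun ψ hψ => h ψ (by simp [hψ]))

noncomputable def atomDiag (A : Str ar) (a : List ℕ) : IForm ar :=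
  andList ((atomsBelow_finite a.length).toFinset.toList.map
    fun φ => if Sat A (asn a) φ then φ else .not φ)

theorem sat_atomDiag {A B : Str ar} {a b : List ℕ} (hlen : a.length = b.length) :
    Sat B (asn b) (atomDiag A a) ↔ atomEquiv A a B b := by
  rw [atomEquiv_iff hlen, atomDiag, sat_andList]
  simp only [List.mem_map, Finset.mem_toList, Set.Finite.mem_toFinset, forall_exists_index,
    and_imp, forall_apply_eq_imp_iff₂]
  refine forall₂_congr fun φ _ => ?_
  split_ifs with h <;> simp [Sat, h]

theorem sat_atomDiag_self (A : Str ar) (a : List ℕ) : Sat A (asn a) (atomDiag A a) :=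
  (sat_atomDiag rfl).2 (atomEquiv_refl A a)

theorem QFree.atomDiag (A : Str ar) (a : List ℕ) : QFree (atomDiag A a) := by
  refine QFree.andList fun ψ hψ => ?_
  obtain ⟨φ, hφ, rfl⟩ := List.mem_map.1 hψ
  have hq := QFree.of_mem_atomsBelow (by simpa using hφ)
  split_ifs
  exacts [hq, hq.not]

theorem freeVars_atomDiag_subset (A : Str ar) {a : List ℕ} (ha : a ≠ []) :
    freeVars (atomDiag A a) ⊆ Set.Iio a.length := by
  refine freeVars_andList_subset (List.length_pos_of_ne_nil ha) fun ψ hψ => ?_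
  obtain ⟨φ, hφ, rfl⟩ := List.mem_map.1 hψ
  have hfv := freeVars_subset_of_mem_atomsBelow (by simpa using hφ)
  split_ifs
  all_goals exact hfv

def PiSeparates (γ : Ordinal) (X : Str ar) (x : List ℕ) (Y : Str ar) (y : List ℕ) : Prop :=
  ∃ φ, IsPi γ φ ∧ freeVars φ ⊆ Set.Iio x.length ∧ Sat X (asn x) φ ∧ ¬ Sat Y (asn y) φ

def SigSeparates (γ : Ordinal) (X : Str ar) (x : List ℕ) (Y : Str ar) (y : List ℕ) : Prop :=
  ∃ σ, IsSig γ σ ∧ freeVars σ ⊆ Set.Iio x.length ∧ Sat X (asn x) σ ∧ ¬ Sat Y (asn y) σ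

theorem IsSig.exists_disj_exs {γ : Ordinal} (hγ : γ ≠ 0) {σ : IForm ar} (h : IsSig γ σ) :
    ∃ (β : ℕ → Ordinal) (vs : ℕ → List ℕ) (φs : ℕ → IForm ar),
      (∀ n, β n < γ) ∧ (∀ n, IsPi (β n) (φs n)) ∧
      (∀ (M : Str ar) (u : ℕ → ℕ), Sat M u σ ↔ ∃ n, Sat M u (IForm.exs (vs n) (φs n))) ∧
      ⋃ n, freeVars (IForm.exs (vs n) (φs n)) = freeVars σ := by
  cases h with
  | qf hq =>
    exact ⟨fun _ => 0, fun _ => [], fun _ => σ, fun _ => pos_iff_ne_zero.2 hγ,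
      fun _ => IsPi.qf hq, fun M u => ⟨fun h => ⟨0, h⟩, fun ⟨_, h⟩ => h⟩, Set.iUnion_const _⟩
  | comp β vs φs hβ hφs => exact ⟨β, vs, φs, hβ, hφs, fun M u => sat_disj, freeVars_disj.symm⟩

theorem IsPi.exists_conj_alls {γ : Ordinal} (hγ : γ ≠ 0) {π : IForm ar} (h : IsPi γ π) :
    ∃ (β : ℕ → Ordinal) (vs : ℕ → List ℕ) (φs : ℕ → IForm ar),
      (∀ n, β n < γ) ∧ (∀ n, IsSig (β n) (φs n)) ∧
      (∀ (M : Str ar) (u : ℕ → ℕ), Sat M u π ↔ ∀ n, Sat M u (IForm.alls (vs n) (φs n))) ∧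
      ⋃ n, freeVars (IForm.alls (vs n) (φs n)) = freeVars π := by
  cases h with
  | qf hq =>
    exact ⟨fun _ => 0, fun _ => [], fun _ => π, fun _ => pos_iff_ne_zero.2 hγ,
      fun _ => IsSig.qf hq, fun M u => ⟨fun h _ => h, fun h => h 0⟩, Set.iUnion_const _⟩
  | comp β vs φs hβ hφs => exact ⟨β, vs, φs, hβ, hφs, fun M u => Iff.rfl, rfl⟩

theorem IsSig.exists_iSup {ι : Type*} [Countable ι] [Nonempty ι] {γ : Ordinal} (hγ : γ ≠ 0)
    {σ : ι → IForm ar} (h : ∀ i, IsSig γ (σ i)) :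
    ∃ χ, IsSig γ χ ∧ freeVars χ ⊆ ⋃ i, freeVars (σ i) ∧
      ∀ (M : Str ar) (u : ℕ → ℕ), Sat M u χ ↔ ∃ i, Sat M u (σ i) := by
  obtain ⟨f, hf⟩ := exists_surjective_nat ι
  choose β vs φs hβ hφs hsat hfv using fun i => (h i).exists_disj_exs hγ
  refine ⟨IForm.disj fun n =>
      IForm.exs (vs (f n.unpair.1) n.unpair.2) (φs (f n.unpair.1) n.unpair.2),
    IsSig.comp _ _ _ (fun n => hβ _ _) (fun n => hφs _ _), ?_, fun M u => ?_⟩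
  · rw [freeVars_disj]
    exact Set.iUnion_subset fun n =>
      (Set.subset_iUnion_of_subset n.unpair.2 subset_rfl).trans
        ((hfv _).trans_subset (Set.subset_iUnion (fun i => freeVars (σ i)) _))
  · rw [sat_disj]
    refine ⟨fun ⟨n, hn⟩ => ⟨f n.unpair.1, (hsat _ M u).2 ⟨_, hn⟩⟩, fun ⟨i, hi⟩ => ?_⟩
    obtain ⟨k, rfl⟩ := hf i
    obtain ⟨m, hm⟩ := (hsat _ M u).1 hi
    exact ⟨Nat.pair k m, by simpa only [Nat.unpair_pair] using hm⟩

theorem IsPi.exists_iInf {ι : Type*} [Countable ι] [Nonempty ι] {γ : Ordinal} (hγ : γ ≠ 0)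
    {π : ι → IForm ar} (h : ∀ i, IsPi γ (π i)) :
    ∃ θ, IsPi γ θ ∧ freeVars θ ⊆ ⋃ i, freeVars (π i) ∧
      ∀ (M : Str ar) (u : ℕ → ℕ), Sat M u θ ↔ ∀ i, Sat M u (π i) := by
  obtain ⟨f, hf⟩ := exists_surjective_nat ι
  choose β vs φs hβ hφs hsat hfv using fun i => (h i).exists_conj_alls hγ
  refine ⟨IForm.conj fun n =>
      IForm.alls (vs (f n.unpair.1) n.unpair.2) (φs (f n.unpair.1) n.unpair.2),
    IsPi.comp _ _ _ (fun n => hβ _ _) (fun n => hφs _ _), ?_, fun M u => ?_⟩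
  · exact Set.iUnion_subset fun n =>
      (Set.subset_iUnion_of_subset n.unpair.2 subset_rfl).trans
        ((hfv _).trans_subset (Set.subset_iUnion (fun i => freeVars (π i)) _))
  · refine ⟨fun h i => ?_, fun h n => (hsat _ M u).1 (h _) _⟩
    obtain ⟨k, rfl⟩ := hf i
    exact (hsat _ M u).2 fun m => by simpa only [Nat.unpair_pair] using h (Nat.pair k m)

def freshVars (k n : ℕ) : List ℕ := (List.range n).map (· + k)

theorem length_freshVars (k n : ℕ) : (freshVars k n).length = n := by simp [freshVars]

theorem mem_freshVars {k n z : ℕ} : z ∈ freshVars k n ↔ k ≤ z ∧ z < k + n := by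
  simp only [freshVars, List.mem_map, List.mem_range]
  exact ⟨by rintro ⟨i, hi, rfl⟩; omega, fun hz => ⟨z - k, by omega, by omega⟩⟩

theorem Iio_add_sdiff_freshVars_subset (k n : ℕ) :
    Set.Iio (k + n) \ {z | z ∈ freshVars k n} ⊆ Set.Iio k := by
  rintro z ⟨hz, hzf⟩
  by_contra hk
  exact hzf (mem_freshVars.2 ⟨not_lt.1 hk, hz⟩)

theorem eqOn_updates_freshVars {k n : ℕ} {v w : List ℕ} (hv : v.length = k)
    (hw : w.length = n) :
    Set.EqOn (updates (asn v) (freshVars k n) w) (asn (v ++ w)) (Set.Iio (k + n)) := by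
  subst hv hw
  intro z hz
  by_cases hzf : z ∈ freshVars v.length w.length
  · obtain ⟨i, hi, hget, hval⟩ := updates_of_mem hzf
    rw [length_freshVars] at hi
    have hgeti : (freshVars v.length w.length).getD i 0 = i + v.length := by
      rw [List.getD_eq_getElem _ _ (by rwa [length_freshVars])]
      simp [freshVars]
    obtain rfl := hgeti.symm.trans hget
    rw [hval _ w (length_freshVars _ _).symm, asn, Nat.add_comm,
      List.getD_append_right _ _ _ _ (Nat.le_add_right _ _), Nat.add_sub_cancel_left]
  · have hzv : z < v.length := Iio_add_sdiff_freshVars_subset _ _ ⟨hz, hzf⟩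
    rw [updates_of_not_mem hzf]
    exact (List.getD_append _ _ _ _ hzv).symm

theorem piSeparates_of_forall {γ β : Ordinal} (hβ : β < γ) {X Y : Str ar} {x y d : List ℕ}
    (hlen : x.length = y.length) {χ : IForm ar} (hχ : IsSig β χ)
    (hfv : freeVars χ ⊆ Set.Iio (x.length + d.length))
    (hX : ∀ c : List ℕ, c.length = d.length → Sat X (asn (x ++ c)) χ)
    (hY : ¬ Sat Y (asn (y ++ d)) χ) : PiSeparates γ X x Y y := by
  refine ⟨.conj fun _ => IForm.alls (freshVars x.length d.length) χ,
    IsPi.comp _ _ (fun _ => χ) (fun _ => hβ) (fun _ => hχ), ?_, fun _ => ?_, fun h => hY ?_⟩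
  · refine Set.iUnion_subset fun _ => ?_
    rw [freeVars_alls]
    exact (Set.sdiff_subset_sdiff_left hfv).trans (Iio_add_sdiff_freshVars_subset _ _)
  · refine sat_alls.2 fun c hc => ?_
    rw [length_freshVars] at hc
    exact (sat_congr ((eqOn_updates_freshVars rfl hc).mono hfv)).2 (hX c hc)
  · exact (sat_congr ((eqOn_updates_freshVars hlen.symm rfl).mono hfv)).1
      (sat_alls.1 (h 0) d (length_freshVars _ _).symm)

theorem sigSeparates_of_exists {γ β : Ordinal} (hβ : β < γ) {X Y : Str ar} {x y d : List ℕ}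
    (hlen : x.length = y.length) {θ : IForm ar} (hθ : IsPi β θ)
    (hfv : freeVars θ ⊆ Set.Iio (x.length + d.length))
    (hX : Sat X (asn (x ++ d)) θ)
    (hY : ∀ c : List ℕ, c.length = d.length → ¬ Sat Y (asn (y ++ c)) θ) :
    SigSeparates γ X x Y y := by
  refine ⟨IForm.disj fun _ => IForm.exs (freshVars x.length d.length) θ,
    IsSig.comp _ _ (fun _ => θ) (fun _ => hβ) (fun _ => hθ), ?_, ?_, fun h => ?_⟩
  · rw [freeVars_disj]
    refine Set.iUnion_subset fun _ => ?_
    rw [freeVars_exs]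
    exact (Set.sdiff_subset_sdiff_left hfv).trans (Iio_add_sdiff_freshVars_subset _ _)
  · exact sat_disj.2 ⟨0, sat_exs.2 ⟨d, (length_freshVars _ _).symm,
      (sat_congr ((eqOn_updates_freshVars rfl rfl).mono hfv)).2 hX⟩⟩
  · obtain ⟨-, hn⟩ := sat_disj.1 h
    obtain ⟨c, hc, hsat⟩ := sat_exs.1 hn
    rw [length_freshVars] at hc
    exact hY c hc ((sat_congr ((eqOn_updates_freshVars hlen.symm hc).mono hfv)).1 hsat)

theorem piSeparates_zero {X Y : Str ar} {x y : List ℕ} (hlen : x.length = y.length)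
    (h : ¬ atomEquiv X x Y y) : PiSeparates 0 X x Y y := by
  exact ⟨atomDiag X x, IsPi.qf (QFree.atomDiag X x),
    freeVars_atomDiag_subset X (ne_nil_of_not_atomEquiv hlen h),
    sat_atomDiag_self X x, fun hY => h ((sat_atomDiag hlen).1 hY)⟩

theorem sigSeparates_zero {X Y : Str ar} {x y : List ℕ} (hlen : x.length = y.length)
    (h : ¬ atomEquiv Y y X x) : SigSeparates 0 X x Y y := by
  exact ⟨.not (atomDiag Y y), IsSig.qf (QFree.atomDiag Y y).not,
    hlen ▸ freeVars_atomDiag_subset Y (ne_nil_of_not_atomEquiv hlen.symm h),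
    fun hX => h ((sat_atomDiag hlen.symm).1 hX),
    fun hY => hY (sat_atomDiag_self Y y)⟩

theorem piSeparates_of_forall_not_atomEquiv {γ : Ordinal} (hγ : γ ≠ 0) {X Y : Str ar}
    {x y d : List ℕ} (hlen : x.length = y.length)
    (h : ∀ c : List ℕ, c.length = d.length → ¬ atomEquiv Y (y ++ d) X (x ++ c)) :
    PiSeparates γ X x Y y := by
  have hyd : y ++ d ≠ [] := ne_nil_of_not_atomEquiv (by simp [hlen]) (h d rfl)
  refine piSeparates_of_forall (pos_iff_ne_zero.2 hγ) hlen
    (IsSig.qf (QFree.atomDiag Y (y ++ d)).not) ?_ (fun c hc hX => h c hc ?_)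
    (fun hY => hY (sat_atomDiag_self Y (y ++ d)))
  · exact (freeVars_atomDiag_subset Y hyd).trans (by simp [hlen])
  · exact (sat_atomDiag (by simp [hlen, hc])).1 hX

theorem sigSeparates_of_forall_not_atomEquiv {γ : Ordinal} (hγ : γ ≠ 0) {X Y : Str ar}
    {x y d : List ℕ} (hlen : x.length = y.length)
    (h : ∀ c : List ℕ, c.length = d.length → ¬ atomEquiv X (x ++ d) Y (y ++ c)) :
    SigSeparates γ X x Y y := by
  have hxd : x ++ d ≠ [] := ne_nil_of_not_atomEquiv (by simp [hlen]) (h d rfl)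
  refine sigSeparates_of_exists (pos_iff_ne_zero.2 hγ) hlen (IsPi.qf (QFree.atomDiag X (x ++ d)))
    ?_ (sat_atomDiag_self X (x ++ d))
    fun c hc hY => h c hc ((sat_atomDiag (by simp [hlen, hc])).1 hY)
  simpa using freeVars_atomDiag_subset X hxd

theorem piSeparates_of_forall_sigSeparates {γ β : Ordinal} (hβ : β < γ) (hβ0 : β ≠ 0)
    {X Y : Str ar} {x y d : List ℕ} (hlen : x.length = y.length)
    (h : ∀ c : List ℕ, c.length = d.length → SigSeparates β X (x ++ c) Y (y ++ d)) :
    PiSeparates γ X x Y y := by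
  have : Nonempty {c : List ℕ // c.length = d.length} := ⟨⟨d, rfl⟩⟩
  choose σ hσ hfv hX hY using fun c : {c : List ℕ // c.length = d.length} => h c.1 c.2
  obtain ⟨χ, hχ, hχfv, hχsat⟩ := IsSig.exists_iSup hβ0 hσ
  refine piSeparates_of_forall hβ hlen hχ (hχfv.trans (Set.iUnion_subset fun c => ?_))
    (fun c hc => (hχsat _ _).2 ⟨⟨c, hc⟩, hX ⟨c, hc⟩⟩) fun hχY => ?_
  · simpa [c.2] using hfv c
  · obtain ⟨c, hc⟩ := (hχsat _ _).1 hχY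
    exact hY c hc

theorem sigSeparates_of_forall_piSeparates {γ β : Ordinal} (hβ : β < γ) (hβ0 : β ≠ 0)
    {X Y : Str ar} {x y d : List ℕ} (hlen : x.length = y.length)
    (h : ∀ c : List ℕ, c.length = d.length → PiSeparates β X (x ++ d) Y (y ++ c)) :
    SigSeparates γ X x Y y := by
  have : Nonempty {c : List ℕ // c.length = d.length} := ⟨⟨d, rfl⟩⟩
  choose π hπ hfv hX hY using fun c : {c : List ℕ // c.length = d.length} => h c.1 c.2
  obtain ⟨θ, hθ, hθfv, hθsat⟩ := IsPi.exists_iInf hβ0 hπ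
  refine sigSeparates_of_exists hβ hlen hθ (hθfv.trans (Set.iUnion_subset fun c => ?_))
    ((hθsat _ _).2 hX) fun c hc hθY => hY ⟨c, hc⟩ ((hθsat _ _).1 hθY _)
  simpa using hfv c

theorem piSeparates_and_sigSeparates_of_not_bfLe (γ : Ordinal) {X Y : Str ar} {x y : List ℕ}
    (hlen : x.length = y.length) (h : ¬ BFLe γ X x Y y) :
    PiSeparates γ X x Y y ∧ SigSeparates γ Y y X x := by
  induction γ using WellFoundedLT.induction generalizing X Y x y with
  | _ γ IH =>
  rcases eq_or_ne γ 0 with rfl | hγ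
  · rw [bfLe_zero_iff] at h
    exact ⟨piSeparates_zero hlen h, sigSeparates_zero hlen.symm h⟩
  simp only [bfLe_iff_of_ne_zero hγ, not_forall, not_exists, not_and] at h
  obtain ⟨d, β, hβ, hd⟩ := h
  rcases eq_or_ne β 0 with rfl | hβ0
  · simp only [bfLe_zero_iff] at hd
    exact ⟨piSeparates_of_forall_not_atomEquiv hγ hlen hd,
      sigSeparates_of_forall_not_atomEquiv hγ hlen.symm hd⟩
  have IHd (c : List ℕ) (hc : c.length = d.length) :=
    IH β hβ (by simp [hlen, hc]) (hd c hc)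
  exact ⟨piSeparates_of_forall_sigSeparates hβ hβ0 hlen fun c hc => (IHd c hc).2,
    sigSeparates_of_forall_piSeparates hβ hβ0 hlen.symm fun c hc => (IHd c hc).1⟩

end

/-- Karp; Ash–Knight. For `α ≥ 1`, `(A,ā) ≤_α (B,b̄)` iff every
`Π^in_α` formula true of `ā` in `A` is true of `b̄` in `B`. -/
theorem bf_iff_pi_type {ar : ℕ → ℕ} (α : Ordinal) (hα : 1 ≤ α)
    (A B : Str ar) (a b : List ℕ) (hlen : a.length = b.length) :
    BFLe α A a B b ↔ PiTypeSub α A a B b := by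
  refine ⟨fun h φ hφ hfv hA => ?_, fun h => ?_⟩
  · exact (h.sat_transfer α hlen).1 φ hφ (fun h0 => absurd h0 (Order.one_le_iff_ne_zero.1 hα))
      (fun z hz => ⟨z, hfv hz, rfl, rfl⟩) hA
  · by_contra hbf
    obtain ⟨φ, hφ, hfv, hA, hB⟩ := (piSeparates_and_sigSeparates_of_not_bfLe α hlen hbf).1
    exact hB (h φ hφ hfv hA)
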